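/- Let K be a differential field of characteristic 0 and let n solutions b₁,…,bₙ of the linear system ∂Y = AY (A an n×n matrix over K) lie in a differential field extension with constant field C. Then b₁,…,bₙ are linearly independent over C if and only if the n×n matrix with columns b₁,…,bₙ is invertible. -/

import Mathlib

/-!
Differentiating a relation `∑ cᵢ bᵢ = 0` among solutions of `∂Y = AY` gives the relation
`∑ (∂cᵢ) bᵢ = 0`, because the terms `∑ cᵢ A bᵢ = A ∑ cᵢ bᵢ` vanish. So the space of `L`-linear
relations, the kernel of the matrix, is stable under `∂`. A nonzero `∂`-stable subspace of `Lⁿ`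
contains a nonzero constant vector: normalise a vector of minimal support to have a coordinate
equal to `1`; its derivative has strictly smaller support, hence vanishes.
-/

open Matrix Finset

section

variable {R S : Type*} [CommRing R] [CommRing S] [Algebra R S] (d : Derivation R S S)
  {ι m : Type*} [Fintype ι] [Fintype m]

def Derivation.IsSolution (A : Matrix m m S) (y : m → S) : Prop :=
  (fun j => d (y j)) = A *ᵥ y

theorem Derivation.apply_sum_smul_of_isSolution {A : Matrix m m S} {b : ι → m → S}
    (hb : ∀ i, d.IsSolution A (b i)) (c : ι → S) :
    (fun j => d ((∑ i, c i • b i) j)) = A *ᵥ ∑ i, c i • b i + ∑ i, d (c i) • b i := by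
  ext j
  have hbj (i : ι) : d (b i j) = (A *ᵥ b i) j := congrFun (hb i) j
  simp only [Finset.sum_apply, Pi.smul_apply, smul_eq_mul, map_sum, d.leibniz, Pi.add_apply,
    mulVec_sum, mulVec_smul, hbj, sum_add_distrib]
  rw [add_right_inj]
  exact sum_congr rfl fun _ _ => mul_comm _ _

theorem Derivation.sum_smul_eq_zero_of_isSolution {A : Matrix m m S} {b : ι → m → S}
    (hb : ∀ i, d.IsSolution A (b i)) {c : ι → S} (hc : ∑ i, c i • b i = 0) :
    ∑ i, d (c i) • b i = 0 := by
  have := d.apply_sum_smul_of_isSolution hb c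
  simp only [hc, Pi.zero_apply, map_zero, mulVec_zero, zero_add] at this
  exact this.symm

end

section

variable {R K : Type*} [CommRing R] [Field K] [Algebra R K] (d : Derivation R K K)
  {ι : Type*} [Fintype ι]

theorem Derivation.exists_constant_ne_zero_mem_of_stable {V : Submodule K (ι → K)}
    (hV : ∀ v ∈ V, (fun i => d (v i)) ∈ V) (hne : V ≠ ⊥) :
    ∃ c ∈ V, c ≠ 0 ∧ ∀ i, d (c i) = 0 := by
  classical
  suffices ∀ k, ∀ v ∈ V, v ≠ 0 → #{i | v i ≠ 0} = k → ∃ c ∈ V, c ≠ 0 ∧ ∀ i, d (c i) = 0 by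
    obtain ⟨v, hv, hv0⟩ := Submodule.exists_mem_ne_zero_of_ne_bot hne
    exact this _ v hv hv0 rfl
  intro k
  induction k using Nat.strong_induction_on with
  | _ k ih =>
  rintro v hv hv0 rfl
  obtain ⟨i₀, hi₀⟩ : ∃ i, v i ≠ 0 := Function.ne_iff.mp hv0
  set w := (v i₀)⁻¹ • v with hw
  have hwV : w ∈ V := V.smul_mem _ hv
  have hwi₀ : w i₀ = 1 := inv_mul_cancel₀ hi₀
  by_cases hdw : ∀ i, d (w i) = 0
  · exact ⟨w, hwV, fun h => by simp [h] at hwi₀, hdw⟩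
  push Not at hdw
  -- normalising `v i₀` to `1` makes `d w` vanish at `i₀`, so its support is strictly smaller
  have hsupp : ({i | d (w i) ≠ 0} : Finset ι) ⊂ ({i | v i ≠ 0} : Finset ι) := by
    refine Finset.ssubset_iff_of_subset (fun i hi => ?_) |>.mpr ⟨i₀, by simp [hi₀], ?_⟩
    · simp only [mem_filter, mem_univ, true_and] at hi ⊢
      intro hvi
      simp [hw, hvi] at hi
    · simp [hwi₀]
  obtain ⟨i, hi⟩ := hdw
  exact ih _ (card_lt_card hsupp) _ (hV w hwV) (Function.ne_iff.mpr ⟨i, hi⟩) rfl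

end

theorem stmt_0_general {L : Type*} [Field L] (D : L → L)
    (hadd : ∀ x y, D (x + y) = D x + D y)
    (hmul : ∀ x y, D (x * y) = x * D y + y * D x)
    {n : ℕ} (A : Matrix (Fin n) (Fin n) L) (b : Fin n → Fin n → L)
    (hb : ∀ i, (fun j => D (b i j)) = A.mulVec (b i)) :
    ((∀ c : Fin n → L, (∀ i, D (c i) = 0) → ∑ i, c i • b i = 0 → ∀ i, c i = 0)
      ↔ IsUnit (Matrix.of fun i j => b j i)) := by
  let d : Derivation ℤ L L := .mk' (AddMonoidHom.mk' D hadd).toIntLinearMap hmul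
  let V := LinearMap.ker (vecMulLinear (of b))
  have mem_V (c : Fin n → L) : c ∈ V ↔ ∑ i, c i • b i = 0 := by
    simp only [V, LinearMap.mem_ker, vecMulLinear_apply, vecMul_eq_sum]
    rfl
  have isUnit_iff : IsUnit (of fun i j => b j i) ↔ V = ⊥ := by
    rw [show of (fun i j => b j i) = (of b)ᵀ from rfl, isUnit_transpose,
      ← vecMul_injective_iff_isUnit, LinearMap.ker_eq_bot]
    rfl
  rw [isUnit_iff]
  constructor
  · intro hlin
    by_contra hne
    obtain ⟨c, hcV, hc0, hdc⟩ := d.exists_constant_ne_zero_mem_of_stable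
      (fun v hv => (mem_V _).2 (d.sum_smul_eq_zero_of_isSolution hb ((mem_V v).1 hv))) hne
    exact hc0 (funext (hlin c hdc ((mem_V c).1 hcV)))
  · intro hV c _ hc
    have : c ∈ V := (mem_V c).2 hc
    rw [hV, Submodule.mem_bot] at this
    exact congrFun this

/-- Solutions b₁,…,bₙ of ∂Y = AY are linearly independent over the constants
iff the matrix with columns b₁,…,bₙ is invertible. -/
theorem stmt_0 {L : Type*} [Field L] [CharZero L] (D : L → L)
    (hadd : ∀ x y, D (x + y) = D x + D y)
    (hmul : ∀ x y, D (x * y) = x * D y + y * D x)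
    {n : ℕ} (A : Matrix (Fin n) (Fin n) L) (b : Fin n → Fin n → L)
    (hb : ∀ i, (fun j => D (b i j)) = A.mulVec (b i)) :
    ((∀ c : Fin n → L, (∀ i, D (c i) = 0) → ∑ i, c i • b i = 0 → ∀ i, c i = 0)
      ↔ IsUnit (Matrix.of fun i j => b j i)) :=
  stmt_0_general D hadd hmul A b hb
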